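/- arXiv:1301.2611 — 10 statements merged into one kernel-verified Lean document; each statement's English description precedes it below -/
import Mathlib

section
/- Let K be a non-archimedean linearly ordered field. The map R ↦ R ∩ P_K is an inclusion-preserving bijection from the set of convex subrings of K strictly containing R_v onto the set of nonempty subsets S ⊆ P_K such that S is an initial segment of P_K (b ∈ S, a ∈ P_K, a ≤ b imply a ∈ S) and S is closed under squaring (a ∈ S implies a² ∈ S); moreover for two such convex subrings R, R' one has R ⊆ R' iff R ∩ P_K ⊆ R' ∩ P_K. (This identifies the rank of K with the chain of nonempty initial segments of P_K modulo multiplicative equivalence.) -/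
/-- The set of positive infinitely large elements of an ordered field. -/
def PK (K : Type*) [Field K] [LinearOrder K] [IsStrictOrderedRing K] : Set K :=
  {x : K | ∀ n : ℕ, (n : K) < x}

/-- The natural valuation ring: the convex hull of ℚ in K. -/
def Rv (K : Type*) [Field K] [LinearOrder K] [IsStrictOrderedRing K] : Set K :=
  {x : K | ∃ n : ℕ, |x| ≤ (n : K)}

/-- A subring is convex if it is closed downwards with respect to absolute value. -/
def IsConvexSubring {K : Type*} [Field K] [LinearOrder K] [IsStrictOrderedRing K] (R : Subring K) : Prop :=
  ∀ x y : K, y ∈ R → |x| ≤ |y| → x ∈ R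

lemma notRv_abs_PK {K : Type*} [Field K] [LinearOrder K] [IsStrictOrderedRing K] {x : K} (h : x ∉ Rv K) :
    |x| ∈ PK K := fun n => lt_of_not_ge (fun hle => h ⟨n, hle⟩)

lemma PK_pos {K : Type*} [Field K] [LinearOrder K] [IsStrictOrderedRing K] {x : K} (h : x ∈ PK K) : 0 < x := by
  have := h 0; simpa using this

lemma PK_one_lt {K : Type*} [Field K] [LinearOrder K] [IsStrictOrderedRing K] {x : K} (h : x ∈ PK K) : 1 < x := by
  have := h 1; simpa using this

lemma incl_lemma {K : Type*} [Field K] [LinearOrder K] [IsStrictOrderedRing K] {R R' : Subring K}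
    (hc : IsConvexSubring R) (hc' : IsConvexSubring R') (hsub' : Rv K ⊆ (R' : Set K))
    (h : (R : Set K) ∩ PK K ⊆ (R' : Set K) ∩ PK K) : (R : Set K) ⊆ (R' : Set K) := by
  intro x hx
  by_cases hv : x ∈ Rv K
  · exact hsub' hv
  · have habs : |x| ∈ PK K := notRv_abs_PK hv
    have hxR : |x| ∈ (R : Set K) := hc |x| x hx (by rw [abs_abs])
    have : |x| ∈ (R' : Set K) ∩ PK K := h ⟨hxR, habs⟩
    exact hc' x |x| this.1 (by rw [abs_abs])

/-- Theorem 3.1: for a non-archimedean ordered field `K`, the map `R ↦ R ∩ P_K` is an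
inclusion-preserving bijection from the convex subrings of `K` strictly containing `R_v`
onto the nonempty initial segments of `P_K` that are closed under squaring. -/
theorem stmt3 {K : Type*} [Field K] [LinearOrder K] [IsStrictOrderedRing K] (hna : Rv K ≠ Set.univ) :
    -- well-defined: the image of a convex subring strictly containing R_v is a
    -- nonempty initial segment of P_K closed under squaring
    (∀ R : Subring K, IsConvexSubring R → Rv K ⊂ (R : Set K) →
      ((R : Set K) ∩ PK K).Nonempty ∧
      (∀ a b : K, b ∈ (R : Set K) ∩ PK K → a ∈ PK K → a ≤ b → a ∈ (R : Set K) ∩ PK K) ∧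
      (∀ a : K, a ∈ (R : Set K) ∩ PK K → a ^ 2 ∈ (R : Set K) ∩ PK K)) ∧
    -- injective
    (∀ R R' : Subring K, IsConvexSubring R → Rv K ⊂ (R : Set K) →
      IsConvexSubring R' → Rv K ⊂ (R' : Set K) →
      (R : Set K) ∩ PK K = (R' : Set K) ∩ PK K → R = R') ∧
    -- surjective
    (∀ S : Set K, S ⊆ PK K → S.Nonempty →
      (∀ a b : K, b ∈ S → a ∈ PK K → a ≤ b → a ∈ S) →
      (∀ a : K, a ∈ S → a ^ 2 ∈ S) →
      ∃ R : Subring K, IsConvexSubring R ∧ Rv K ⊂ (R : Set K) ∧ (R : Set K) ∩ PK K = S) ∧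
    -- inclusion-preserving in both directions
    (∀ R R' : Subring K, IsConvexSubring R → Rv K ⊂ (R : Set K) →
      IsConvexSubring R' → Rv K ⊂ (R' : Set K) →
      ((R : Set K) ⊆ (R' : Set K) ↔ (R : Set K) ∩ PK K ⊆ (R' : Set K) ∩ PK K)) := by
  refine ⟨?_, ?_, ?_, ?_⟩
  · -- well-definedness
    intro R hc hR
    refine ⟨?_, ?_, ?_⟩
    · obtain ⟨x, hxR, hxv⟩ := Set.exists_of_ssubset hR
      have habs : |x| ∈ PK K := notRv_abs_PK hxv
      exact ⟨|x|, hc |x| x hxR (by rw [abs_abs]), habs⟩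
    · rintro a b ⟨hbR, hbP⟩ haP hab
      refine ⟨hc a b hbR ?_, haP⟩
      rw [abs_of_pos (PK_pos haP), abs_of_pos (PK_pos hbP)]; exact hab
    · rintro a ⟨haR, haP⟩
      refine ⟨by simpa [sq] using mul_mem haR haR, fun n => ?_⟩
      have h1 : (1:K) < a := PK_one_lt haP
      calc (n:K) < a := haP n
        _ ≤ a^2 := by nlinarith
  · -- injectivity
    intro R R' hc hR hc' hR' heq
    ext x
    constructor
    · exact fun h => incl_lemma hc hc' hR'.1 (le_of_eq heq) h
    · exact fun h => incl_lemma hc' hc hR.1 (le_of_eq heq.symm) h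
  · -- surjectivity
    intro S hSP hSne hinit hsq
    have hSpos : ∀ s ∈ S, (0:K) < s := fun s hs => PK_pos (hSP hs)
    have hS1 : ∀ s ∈ S, (1:K) < s := fun s hs => PK_one_lt (hSP hs)
    have key : ∀ x y : K, (∃ s ∈ S, |x| ≤ s) → (∃ s ∈ S, |y| ≤ s) →
        ∃ s ∈ S, |x| + |y| ≤ s ∧ |x| * |y| ≤ s := by
      rintro x y ⟨s, hs, hxs⟩ ⟨t, ht, hyt⟩
      set m := max s t with hm
      have hmS : m ∈ S := by
        rcases max_cases s t with ⟨h1, _⟩ | ⟨h1, _⟩ <;> rw [hm, h1] <;> assumption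
      have hm2 : m^2 ∈ S := hsq m hmS
      have hm1 : (1:K) < m := hS1 m hmS
      have h2m : (2:K) < m := by have := hSP hmS 2; simpa using this
      have hxm : |x| ≤ m := hxs.trans (le_max_left s t)
      have hym : |y| ≤ m := hyt.trans (le_max_right s t)
      refine ⟨m^2, hm2, ?_, ?_⟩
      · nlinarith
      · nlinarith [abs_nonneg x, abs_nonneg y]
    refine ⟨{
      carrier := {x : K | ∃ s ∈ S, |x| ≤ s}
      zero_mem' := by
        obtain ⟨s, hs⟩ := hSne
        exact ⟨s, hs, by simpa using (hSpos s hs).le⟩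
      one_mem' := by
        obtain ⟨s, hs⟩ := hSne
        exact ⟨s, hs, by simpa using (hS1 s hs).le⟩
      add_mem' := by
        rintro a b ha hb
        obtain ⟨s, hs, h1, _⟩ := key a b ha hb
        exact ⟨s, hs, (abs_add_le a b).trans h1⟩
      mul_mem' := by
        rintro a b ha hb
        obtain ⟨s, hs, _, h2⟩ := key a b ha hb
        exact ⟨s, hs, by rw [abs_mul]; exact h2⟩
      neg_mem' := by
        rintro a ⟨s, hs, h⟩
        exact ⟨s, hs, by rwa [abs_neg]⟩
    }, ?_, ?_, ?_⟩
    · rintro x y ⟨s, hs, h⟩ hxy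
      exact ⟨s, hs, hxy.trans h⟩
    · constructor
      · rintro x ⟨n, hn⟩
        obtain ⟨s, hs⟩ := hSne
        exact ⟨s, hs, hn.trans (hSP hs n).le⟩
      · intro hsub
        obtain ⟨s, hs⟩ := hSne
        have : s ∈ Rv K := hsub ⟨s, hs, le_of_eq (abs_of_pos (hSpos s hs))⟩
        obtain ⟨n, hn⟩ := this
        exact absurd hn (not_le.2 (by rw [abs_of_pos (hSpos s hs)]; exact hSP hs n))
    · ext x
      constructor
      · rintro ⟨⟨s, hs, hxs⟩, hxP⟩
        exact hinit x s hs hxP (by rwa [abs_of_pos (PK_pos hxP)] at hxs)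
      · intro hx
        exact ⟨⟨x, hx, le_of_eq (abs_of_pos (hSpos x hx))⟩, hSP hx⟩
  · -- inclusion-preserving
    intro R R' hc hR hc' hR'
    constructor
    · intro h x hx
      exact ⟨h hx.1, hx.2⟩
    · exact fun h => incl_lemma hc hc' hR'.1 h
end

section
/- Let K be a linearly ordered field and a, b ∈ P_K, and let R_a (resp. R_b) denote the smallest convex subring of K containing a (resp. b). Then R_a ⊆ R_b if and only if there is n ∈ ℕ with a ≤ bⁿ; in particular R_a = R_b if and only if a and b are multiplicatively equivalent. (Hence the principal rank of K is anti-isomorphic to the chain P_K modulo multiplicative equivalence, i.e. to the value set Γ with reversed order.) -/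
/-- The subring of elements bounded by some power of `a`, for `2 ≤ a`. -/
def powSubring {K : Type*} [Field K] [LinearOrder K] [IsStrictOrderedRing K] (a : K) (ha : (2 : K) ≤ a) : Subring K where
  carrier := {x : K | ∃ n : ℕ, |x| ≤ a ^ n}
  one_mem' := ⟨0, by simp⟩
  zero_mem' := ⟨0, by simp⟩
  mul_mem' := by
    rintro x y ⟨n, hn⟩ ⟨m, hm⟩
    refine ⟨n + m, ?_⟩
    rw [abs_mul, pow_add]
    exact mul_le_mul hn hm (abs_nonneg y) (pow_nonneg (by linarith) n)
  add_mem' := by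
    rintro x y ⟨n, hn⟩ ⟨m, hm⟩
    have ha1 : (1 : K) ≤ a := by linarith
    refine ⟨n + m + 1, ?_⟩
    have h1 : a ^ n ≤ a ^ (n + m) := pow_le_pow_right₀ ha1 (Nat.le_add_right n m)
    have h2 : a ^ m ≤ a ^ (n + m) := pow_le_pow_right₀ ha1 (Nat.le_add_left m n)
    have h3 : (0 : K) ≤ a ^ (n + m) := pow_nonneg (by linarith) _
    calc |x + y| ≤ |x| + |y| := abs_add_le x y
      _ ≤ a ^ (n + m) + a ^ (n + m) := by linarith
      _ = 2 * a ^ (n + m) := by ring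
      _ ≤ a * a ^ (n + m) := by nlinarith
      _ = a ^ (n + m + 1) := by rw [pow_succ]; ring
  neg_mem' := by
    rintro x ⟨n, hn⟩
    exact ⟨n, by rwa [abs_neg]⟩

theorem mem_powSubring {K : Type*} [Field K] [LinearOrder K] [IsStrictOrderedRing K] {a : K} {ha : (2 : K) ≤ a} {x : K} :
    x ∈ powSubring a ha ↔ ∃ n : ℕ, |x| ≤ a ^ n := Iff.rfl

theorem powSubring_convex {K : Type*} [Field K] [LinearOrder K] [IsStrictOrderedRing K] (a : K) (ha : (2 : K) ≤ a) :
    IsConvexSubring (powSubring a ha) := by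
  intro x y hy hxy
  obtain ⟨n, hn⟩ := mem_powSubring.mp hy
  exact mem_powSubring.mpr ⟨n, le_trans hxy hn⟩

/-- If `R_a` (resp. `R_b`) is the smallest convex subring containing `a` (resp. `b`),
for `a, b ∈ P_K`, then `R_a ⊆ R_b` iff `a ≤ bⁿ` for some `n`, and `R_a = R_b` iff
`a` and `b` are multiplicatively equivalent. -/
theorem stmt5 {K : Type*} [Field K] [LinearOrder K] [IsStrictOrderedRing K] (a b : K)
    (ha : a ∈ PK K) (hb : b ∈ PK K) (Ra Rb : Subring K)
    (hRa : IsConvexSubring Ra ∧ a ∈ Ra ∧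
      ∀ R' : Subring K, IsConvexSubring R' → a ∈ R' → Ra ≤ R')
    (hRb : IsConvexSubring Rb ∧ b ∈ Rb ∧
      ∀ R' : Subring K, IsConvexSubring R' → b ∈ R' → Rb ≤ R') :
    (Ra ≤ Rb ↔ ∃ n : ℕ, a ≤ b ^ n) ∧
    (Ra = Rb ↔ ∃ n : ℕ, a ≤ b ^ n ∧ b ≤ a ^ n) := by
  obtain ⟨hRac, haRa, hRamin⟩ := hRa
  obtain ⟨hRbc, hbRb, hRbmin⟩ := hRb
  have ha2 : (2 : K) ≤ a := le_of_lt (by simpa using ha 2)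
  have hb2 : (2 : K) ≤ b := le_of_lt (by simpa using hb 2)
  have ha0 : (0 : K) < a := by linarith
  have hb0 : (0 : K) < b := by linarith
  have ha1 : (1 : K) ≤ a := by linarith
  have hb1 : (1 : K) ≤ b := by linarith
  -- key: Ra ≤ Rb ↔ ∃ n, a ≤ b ^ n
  have key : ∀ (x y : K), (2:K) ≤ x → (2:K) ≤ y → ∀ (Rx Ry : Subring K),
      IsConvexSubring Rx → x ∈ Rx → (∀ R' : Subring K, IsConvexSubring R' → x ∈ R' → Rx ≤ R') →
      IsConvexSubring Ry → y ∈ Ry → (∀ R' : Subring K, IsConvexSubring R' → y ∈ R' → Ry ≤ R') →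
      (Rx ≤ Ry ↔ ∃ n : ℕ, x ≤ y ^ n) := by
    intro x y hx2 hy2 Rx Ry hRxc hxRx hRxmin hRyc hyRy hRymin
    constructor
    · intro hle
      have hx : x ∈ powSubring y hy2 :=
        hRymin (powSubring y hy2) (powSubring_convex y hy2)
          (mem_powSubring.mpr ⟨1, by simp [abs_of_nonneg (by linarith : (0:K) ≤ y)]⟩)
          (hle hxRx)
      obtain ⟨n, hn⟩ := mem_powSubring.mp hx
      exact ⟨n, le_trans (le_abs_self x) hn⟩
    · rintro ⟨n, hn⟩
      have hxRy : x ∈ Ry := by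
        refine hRyc x (y ^ n) (pow_mem hyRy n) ?_
        rw [abs_of_nonneg (by linarith : (0:K) ≤ x),
          abs_of_nonneg (pow_nonneg (by linarith) n)]
        exact hn
      exact hRxmin Ry hRyc hxRy
  have h1 := key a b ha2 hb2 Ra Rb hRac haRa hRamin hRbc hbRb hRbmin
  have h2 := key b a hb2 ha2 Rb Ra hRbc hbRb hRbmin hRac haRa hRamin
  refine ⟨h1, ?_⟩
  constructor
  · intro heq
    obtain ⟨n, hn⟩ := h1.mp (le_of_eq heq)
    obtain ⟨m, hm⟩ := h2.mp (le_of_eq heq.symm)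
    refine ⟨max n m, ?_, ?_⟩
    · exact le_trans hn (pow_le_pow_right₀ hb1 (le_max_left n m))
    · exact le_trans hm (pow_le_pow_right₀ ha1 (le_max_right n m))
  · rintro ⟨n, hab, hba⟩
    exact le_antisymm (h1.mpr ⟨n, hab⟩) (h2.mpr ⟨n, hba⟩)
end

section
/- Let K be a linearly ordered field and a, b ∈ P_K. (i) If a and b are archimedean equivalent with respect to addition, i.e. there is n ∈ ℕ with a ≤ n·b and b ≤ n·a, then a and b are multiplicatively equivalent. (ii) If a and b are multiplicatively equivalent, then a + b is multiplicatively equivalent to a and a·b is multiplicatively equivalent to a (the multiplicative equivalence classes are closed under addition and multiplication). -/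
/-- Multiplicative equivalence on `P_K`. -/
def MulEquiv' {K : Type*} [Field K] [LinearOrder K] [IsStrictOrderedRing K] (a b : K) : Prop :=
  ∃ n : ℕ, a ≤ b ^ n ∧ b ≤ a ^ n

/-- Lemma 3.2: (i) archimedean (additive) equivalence implies multiplicative
equivalence on `P_K`; (ii) the multiplicative equivalence classes are closed under
addition and multiplication. -/
theorem stmt6 {K : Type*} [Field K] [LinearOrder K] [IsStrictOrderedRing K] (a b : K)
    (ha : a ∈ PK K) (hb : b ∈ PK K) :
    ((∃ n : ℕ, a ≤ n • b ∧ b ≤ n • a) → MulEquiv' a b) ∧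
    (MulEquiv' a b → MulEquiv' (a + b) a ∧ MulEquiv' (a * b) a) := by
  have ha1 : (1 : K) < a := by simpa using ha 1
  have hb1 : (1 : K) < b := by simpa using hb 1
  constructor
  · rintro ⟨n, h1, h2⟩
    refine ⟨2, ?_, ?_⟩
    · calc a ≤ n • b := h1
        _ = (n : K) * b := by simp [nsmul_eq_mul]
        _ ≤ b * b := mul_le_mul_of_nonneg_right (hb n).le (by linarith)
        _ = b ^ 2 := (sq b).symm
    · calc b ≤ n • a := h2
        _ = (n : K) * a := by simp [nsmul_eq_mul]
        _ ≤ a * a := mul_le_mul_of_nonneg_right (ha n).le (by linarith)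
        _ = a ^ 2 := (sq a).symm
  · rintro ⟨n, h1, h2⟩
    have hn : n ≠ 0 := by
      rintro rfl
      simp only [pow_zero] at h2
      linarith
    have han : a ≤ a ^ n := le_self_pow₀ ha1.le hn
    have h2a : (2 : K) ≤ a := by
      have := ha 2; push_cast at this; linarith
    have hpow : (0 : K) < a ^ n := by positivity
    constructor
    · refine ⟨n + 1, ?_, ?_⟩
      · calc a + b ≤ a ^ n + a ^ n := add_le_add han h2
          _ = 2 * a ^ n := by ring
          _ ≤ a * a ^ n := mul_le_mul_of_nonneg_right h2a hpow.le
          _ = a ^ (n + 1) := (pow_succ' a n).symm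
      · have : a ≤ a + b := by linarith
        exact this.trans (le_self_pow₀ (by linarith) (Nat.succ_ne_zero n))
    · refine ⟨n + 1, ?_, ?_⟩
      · calc a * b ≤ a * a ^ n :=
            mul_le_mul_of_nonneg_left h2 (by linarith)
          _ = a ^ (n + 1) := (pow_succ' a n).symm
      · have hab : a ≤ a * b := le_mul_of_one_le_right (by linarith) hb1.le
        have : (1 : K) ≤ a * b := le_trans ha1.le hab
        exact hab.trans (le_self_pow₀ this (Nat.succ_ne_zero n))
end

section
/- Let K be a linearly ordered field and σ an order-preserving field automorphism of K that is a weak isometry, i.e. for every a ∈ P_K the elements σ(a) and a are multiplicatively equivalent. Then every convex subring R of K with R_v ⊆ R satisfies σ(R) = R; that is, every convex valuation coarser than the natural valuation is σ-compatible, so the σ-rank of K equals the rank of K. -/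
lemma abs_map_eq {K : Type*} [Field K] [LinearOrder K] [IsStrictOrderedRing K] (σ : K ≃+* K)
    (hσ : ∀ x y : K, x ≤ y → σ x ≤ σ y) (x : K) : |σ x| = σ |x| := by
  rcases le_total 0 x with h | h
  · rw [abs_of_nonneg h, abs_of_nonneg (by simpa using hσ 0 x h)]
  · rw [abs_of_nonpos h, abs_of_nonpos (by simpa using hσ x 0 h), map_neg]

lemma aux_sub {K : Type*} [Field K] [LinearOrder K] [IsStrictOrderedRing K] (σ : K ≃+* K)
    (hσ : ∀ x y : K, x ≤ y → σ x ≤ σ y)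
    (hweak : ∀ a : K, a ∈ PK K → ∃ n : ℕ, σ a ≤ a ^ n ∧ a ≤ (σ a) ^ n)
    (R : Subring K) (hconv : IsConvexSubring R) (hRv : Rv K ⊆ (R : Set K))
    (x : K) (hx : x ∈ R) : σ x ∈ R := by
  have habs : |x| ∈ R := hconv |x| x hx (by rw [abs_abs])
  by_cases hP : |x| ∈ PK K
  · obtain ⟨n, h1, -⟩ := hweak |x| hP
    have hpow : |x| ^ n ∈ R := pow_mem habs n
    refine hconv (σ x) (|x| ^ n) hpow ?_
    rw [abs_map_eq σ hσ]
    calc σ |x| ≤ |x| ^ n := h1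
    _ ≤ |(|x| ^ n)| := le_abs_self _
  · simp only [PK, Set.mem_setOf_eq, not_forall, not_lt] at hP
    obtain ⟨n, hn⟩ := hP
    apply hRv
    refine ⟨n, ?_⟩
    rw [abs_map_eq σ hσ]
    calc σ |x| ≤ σ n := hσ _ _ hn
    _ = (n : K) := by simp

/-- Corollary 4.4: if `σ` is a weak isometry (i.e. `σ(a)` is multiplicatively
equivalent to `a` for every `a ∈ P_K`), then every convex subring containing `R_v`
is `σ`-invariant, so the `σ`-rank equals the rank. -/
theorem stmt8 {K : Type*} [Field K] [LinearOrder K] [IsStrictOrderedRing K] (σ : K ≃+* K)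
    (hσ : ∀ x y : K, x ≤ y → σ x ≤ σ y)
    (hweak : ∀ a : K, a ∈ PK K → ∃ n : ℕ, σ a ≤ a ^ n ∧ a ≤ (σ a) ^ n) :
    ∀ R : Subring K, IsConvexSubring R → Rv K ⊆ (R : Set K) →
      σ '' (R : Set K) = (R : Set K) := by
  intro R hconv hRv
  have hσ' : ∀ x y : K, x ≤ y → σ.symm x ≤ σ.symm y := by
    intro x y h
    by_contra hc
    push_neg at hc
    have h1 : σ (σ.symm y) ≤ σ (σ.symm x) := hσ _ _ hc.le
    simp only [RingEquiv.apply_symm_apply] at h1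
    have hxy : x = y := le_antisymm h h1
    exact absurd (hxy ▸ rfl : σ.symm x = σ.symm y) (ne_of_gt hc)
  have hweak' : ∀ a : K, a ∈ PK K → ∃ n : ℕ, σ.symm a ≤ a ^ n ∧ a ≤ (σ.symm a) ^ n := by
    intro a ha
    have hsa : σ.symm a ∈ PK K := by
      intro n
      have := hσ' _ _ (ha n).le
      simp only [map_natCast] at this
      rcases this.lt_or_eq with h | h
      · exact h
      · exfalso
        have : (n : K) = a := by
          have := congrArg σ h
          simpa using this
        exact absurd this (ne_of_lt (ha n))
    obtain ⟨n, h1, h2⟩ := hweak (σ.symm a) hsa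
    simp only [RingEquiv.apply_symm_apply] at h1 h2
    exact ⟨n, h2, h1⟩
  apply Set.eq_of_subset_of_subset
  · rintro _ ⟨x, hx, rfl⟩
    exact aux_sub σ hσ hweak R hconv hRv x hx
  · intro x hx
    exact ⟨σ.symm x, aux_sub σ.symm hσ' hweak' R hconv hRv x hx, σ.apply_symm_apply x⟩
end

section
/- Let K be a linearly ordered field, σ an order-preserving field automorphism of K, and a ∈ P_K. Then the smallest convex subring of K containing a, namely R_a = {x ∈ K : |x| ≤ aⁿ for some n ∈ ℕ}, satisfies σ(R_a) = R_a if and only if σ(a) and a are multiplicatively equivalent, i.e. there is n ∈ ℕ with σ(a) ≤ aⁿ and a ≤ σ(a)ⁿ. (This identifies the σ-compatible principal convex valuation rings with the fixed points of the automorphism σ_Γ induced on the value set Γ.) -/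
/-- Corollary 4.5: for `a ∈ P_K`, the principal convex subring
`R_a = {x : |x| ≤ aⁿ for some n}` is `σ`-invariant if and only if `σ(a)` and `a`
are multiplicatively equivalent. -/
theorem stmt9 {K : Type*} [Field K] [LinearOrder K] [IsStrictOrderedRing K] (σ : K ≃+* K)
    (hσ : ∀ x y : K, x ≤ y → σ x ≤ σ y)
    (a : K) (ha : a ∈ PK K) :
    σ '' {x : K | ∃ n : ℕ, |x| ≤ a ^ n} = {x : K | ∃ n : ℕ, |x| ≤ a ^ n} ↔
      ∃ n : ℕ, σ a ≤ a ^ n ∧ a ≤ (σ a) ^ n := by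
  have ha1 : (1 : K) < a := by have := ha 1; simpa using this
  have ha0 : (0 : K) < a := lt_trans one_pos ha1
  have hmono : Monotone σ := fun x y h => hσ x y h
  have hsm : StrictMono σ := hmono.strictMono_of_injective σ.injective
  have habs : ∀ x : K, σ |x| = |σ x| := by
    intro x
    rcases le_total 0 x with h | h
    · rw [abs_of_nonneg h, abs_of_nonneg]
      have := hmono h; rwa [map_zero] at this
    · rw [abs_of_nonpos h, abs_of_nonpos, map_neg]
      have := hmono h; rwa [map_zero] at this
  have hσa1 : (1 : K) < σ a := by have := hsm ha1; rwa [map_one] at this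
  constructor
  · intro hR
    have h1 : σ a ∈ {x : K | ∃ n : ℕ, |x| ≤ a ^ n} := by
      rw [← hR]
      exact ⟨a, ⟨1, by rw [pow_one, abs_of_pos ha0]⟩, rfl⟩
    obtain ⟨n1, hn1⟩ := h1
    have h2 : a ∈ σ '' {x : K | ∃ n : ℕ, |x| ≤ a ^ n} := by
      rw [hR]; exact ⟨1, by rw [pow_one, abs_of_pos ha0]⟩
    obtain ⟨x, ⟨n2, hx⟩, hxa⟩ := h2
    refine ⟨max n1 n2, ?_, ?_⟩
    · calc σ a ≤ |σ a| := le_abs_self _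
        _ ≤ a ^ n1 := hn1
        _ ≤ a ^ max n1 n2 := pow_le_pow_right₀ ha1.le (le_max_left _ _)
    · calc a = σ x := hxa.symm
        _ ≤ σ |x| := hmono (le_abs_self x)
        _ ≤ σ (a ^ n2) := hmono hx
        _ = (σ a) ^ n2 := map_pow σ a n2
        _ ≤ (σ a) ^ max n1 n2 := pow_le_pow_right₀ hσa1.le (le_max_right _ _)
  · rintro ⟨n, h1, h2⟩
    ext y
    constructor
    · rintro ⟨x, ⟨m, hm⟩, rfl⟩
      refine ⟨n * m, ?_⟩
      calc |σ x| = σ |x| := (habs x).symm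
        _ ≤ σ (a ^ m) := hmono hm
        _ = (σ a) ^ m := map_pow σ a m
        _ ≤ (a ^ n) ^ m := pow_le_pow_left₀ (le_of_lt (lt_trans one_pos hσa1)) h1 m
        _ = a ^ (n * m) := (pow_mul a n m).symm
    · rintro ⟨m, hm⟩
      refine ⟨σ.symm y, ⟨n * m, ?_⟩, σ.apply_symm_apply y⟩
      have hle : σ |σ.symm y| ≤ σ (a ^ (n * m)) := by
        rw [habs, σ.apply_symm_apply]
        calc |y| ≤ a ^ m := hm
          _ ≤ ((σ a) ^ n) ^ m := pow_le_pow_left₀ ha0.le h2 m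
          _ = (σ a) ^ (n * m) := by rw [← pow_mul]
          _ = σ (a ^ (n * m)) := (map_pow σ a (n * m)).symm
      exact hsm.le_iff_le.mp hle
end

section
/- Let μ be any linearly ordered set and let Γ = μ ×ₗ ℚ be the lexicographic product (the concatenation of μ copies of ℚ). Define f : Γ → Γ by f(m, q) = (m, q − 1). Then f is an order-preserving bijection with f(γ) < γ for every γ ∈ Γ (a strict left shift), and for all (m, q), (m', q') ∈ Γ: there exists n ∈ ℕ with f^[n](m, q) ≤ (m', q') and f^[n](m', q') ≤ (m, q) if and only if m = m'. Consequently the quotient of Γ by the equivalence relation ∼_f induced by f is order-isomorphic to μ. -/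
/-- The left shift `(m, q) ↦ (m, q - 1)` on the concatenation `μ ×ₗ ℚ` of `μ` copies of `ℚ`. -/
def shiftf (μ : Type*) : (μ ×ₗ ℚ) → (μ ×ₗ ℚ) :=
  fun γ => toLex ((ofLex γ).1, (ofLex γ).2 - 1)

/-- The equivalence relation induced by the left shift `shiftf μ`. -/
def relf (μ : Type*) [LinearOrder μ] : (μ ×ₗ ℚ) → (μ ×ₗ ℚ) → Prop :=
  fun γ γ' => ∃ n : ℕ, (shiftf μ)^[n] γ ≤ γ' ∧ (shiftf μ)^[n] γ' ≤ γ

lemma shiftf_iter {μ : Type*} (n : ℕ) (γ : μ ×ₗ ℚ) :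
    (shiftf μ)^[n] γ = toLex ((ofLex γ).1, (ofLex γ).2 - n) := by
  induction n with
  | zero => simp
  | succ n ih =>
    rw [Function.iterate_succ_apply', ih, shiftf]
    simp

    ring_nf

lemma relf_fst {μ : Type*} [LinearOrder μ] {γ γ' : μ ×ₗ ℚ} (h : relf μ γ γ') :
    (ofLex γ).1 = (ofLex γ').1 := by
  obtain ⟨n, h1, h2⟩ := h
  rw [shiftf_iter] at h1 h2
  rcases Prod.Lex.le_iff.mp h1 with h | h
  · rcases Prod.Lex.le_iff.mp h2 with h' | h'
    · exact absurd (lt_trans h h') (lt_irrefl _)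
    · exact absurd h (h'.1 ▸ lt_irrefl _)
  · exact h.1

lemma relf_of_fst {μ : Type*} [LinearOrder μ] (m : μ) (q q' : ℚ) :
    relf μ (toLex (m, q)) (toLex (m, q')) := by
  obtain ⟨n, hn⟩ := exists_nat_gt (max (q - q') (q' - q))
  refine ⟨n, ?_, ?_⟩ <;> rw [shiftf_iter] <;>
    refine Prod.Lex.le_iff.mpr (Or.inr ⟨rfl, ?_⟩)
  · have := (max_lt_iff.mp hn).1; simp only [ofLex_toLex]; linarith
  · have := (max_lt_iff.mp hn).2; simp only [ofLex_toLex]; linarith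

/-- The map `f(m,q) = (m, q-1)` on `Γ = μ ×ₗ ℚ` is an order-preserving bijection and a
strict left shift; two elements are `∼_f`-equivalent iff they lie in the same copy of `ℚ`;
consequently `Γ/∼_f` is order-isomorphic to `μ`. -/
theorem stmt13 {μ : Type*} [LinearOrder μ] :
    Monotone (shiftf μ) ∧ Function.Bijective (shiftf μ) ∧
    (∀ γ : μ ×ₗ ℚ, shiftf μ γ < γ) ∧
    (∀ (m m' : μ) (q q' : ℚ),
      relf μ (toLex (m, q)) (toLex (m', q')) ↔ m = m') ∧
    (∃ F : Quot (relf μ) ≃ μ,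
      (∀ γ : μ ×ₗ ℚ, F (Quot.mk (relf μ) γ) = (ofLex γ).1) ∧
      (∀ γ δ : μ ×ₗ ℚ, γ ≤ δ →
        F (Quot.mk (relf μ) γ) ≤ F (Quot.mk (relf μ) δ))) := by
  refine ⟨?_, ?_, ?_, ?_, ?_⟩
  · intro a b hab
    rcases Prod.Lex.le_iff.mp hab with h | ⟨h1, h2⟩
    · exact Prod.Lex.le_iff.mpr (Or.inl h)
    · exact Prod.Lex.le_iff.mpr (Or.inr ⟨h1, by simpa [shiftf] using h2⟩)
  · constructor
    · intro a b hab
      have h1 : (ofLex a).1 = (ofLex b).1 := congrArg (fun x => (ofLex x).1) hab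
      have h2 : (ofLex a).2 - 1 = (ofLex b).2 - 1 := congrArg (fun x => (ofLex x).2) hab
      have h2' : (ofLex a).2 = (ofLex b).2 := by linarith
      have : ofLex a = ofLex b := Prod.ext h1 h2'
      exact ofLex.injective this
    · intro b
      exact ⟨toLex ((ofLex b).1, (ofLex b).2 + 1), by simp [shiftf]⟩
  · intro γ
    refine Prod.Lex.lt_iff.mpr (Or.inr ⟨rfl, by exact sub_one_lt _⟩)
  · intro m m' q q'
    constructor
    · intro h
      exact relf_fst h
    · rintro rfl
      exact relf_of_fst m q q'
  · refine ⟨⟨Quot.lift (fun γ => (ofLex γ).1) (fun a b h => relf_fst h),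
      fun m => Quot.mk _ (toLex (m, 0)), ?_, fun m => rfl⟩, fun γ => rfl, ?_⟩
    · intro x
      induction x using Quot.ind with
      | _ γ =>
        exact Quot.sound (relf_of_fst (ofLex γ).1 0 (ofLex γ).2)
    · intro γ δ hle
      rcases (Prod.Lex.le_iff (x := γ) (y := δ)).mp hle with h | ⟨h1, _⟩
      · exact le_of_lt h
      · exact le_of_eq h1
end

section
/- Let K be a linearly ordered field and σ an order-preserving field automorphism of K with x² ≤ σ(x) for all x ∈ P_K. For a, b ∈ P_K write a ∼_σ b iff there is n ∈ ℕ with a ≤ σ^[n](b) and b ≤ σ^[n](a). Then: (i) if a and b are multiplicatively equivalent then a ∼_σ b, and if a and b are archimedean equivalent with respect to addition (there is n ∈ ℕ with a ≤ n·b and b ≤ n·a) then a ∼_σ b; (ii) if a ∼_σ b then a + b ∼_σ a, a·b ∼_σ a, and σ(a) ∼_σ a (the ∼_σ-classes are closed under addition, multiplication and σ). -/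
/-- The equivalence `∼_σ` on `P_K` induced by an automorphism `σ`. -/
def SigmaEquiv {K : Type*} [Field K] [LinearOrder K] [IsStrictOrderedRing K] (σ : K → K) (a b : K) : Prop :=
  ∃ n : ℕ, a ≤ σ^[n] b ∧ b ≤ σ^[n] a

/-- Lemma 5.1: for `σ` an order-preserving automorphism with `x² ≤ σ(x)` on `P_K`:
(i) multiplicative equivalence and additive archimedean equivalence each imply `∼_σ`;
(ii) the `∼_σ`-classes are closed under addition, multiplication and `σ`. -/
theorem stmt15 {K : Type*} [Field K] [LinearOrder K] [IsStrictOrderedRing K] (σ : K ≃+* K)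
    (hσ : ∀ x y : K, x ≤ y → σ x ≤ σ y)
    (hgrow : ∀ x : K, x ∈ PK K → x ^ 2 ≤ σ x)
    (a b : K) (ha : a ∈ PK K) (hb : b ∈ PK K) :
    ((∃ n : ℕ, a ≤ b ^ n ∧ b ≤ a ^ n) → SigmaEquiv σ a b) ∧
    ((∃ n : ℕ, a ≤ n • b ∧ b ≤ n • a) → SigmaEquiv σ a b) ∧
    (SigmaEquiv σ a b →
      SigmaEquiv σ (a + b) a ∧ SigmaEquiv σ (a * b) a ∧ SigmaEquiv σ (σ a) a) := by
  -- basic facts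
  have h1 : ∀ x : K, x ∈ PK K → (1 : K) < x := by
    intro x hx
    have := hx 1
    simpa using this
  have h2 : ∀ x : K, x ∈ PK K → (2 : K) < x := by
    intro x hx
    have := hx 2
    simpa using this
  have hself : ∀ x : K, x ∈ PK K → x ≤ σ x := by
    intro x hx
    have h := hgrow x hx
    have h1x := h1 x hx
    nlinarith
  have hmem : ∀ x : K, x ∈ PK K → σ x ∈ PK K := by
    intro x hx n
    exact lt_of_lt_of_le (hx n) (hself x hx)
  have iter_mem : ∀ x : K, x ∈ PK K → ∀ n : ℕ, σ^[n] x ∈ PK K := by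
    intro x hx n
    induction n with
    | zero => simpa using hx
    | succ k ih =>
        rw [Function.iterate_succ_apply']
        exact hmem _ ih
  have iter_le : ∀ x : K, x ∈ PK K → ∀ n : ℕ, x ≤ σ^[n] x := by
    intro x hx n
    induction n with
    | zero => simp
    | succ k ih =>
        rw [Function.iterate_succ_apply']
        exact le_trans ih (hself _ (iter_mem x hx k))
  have pow2 : ∀ x : K, x ∈ PK K → ∀ n : ℕ, x ^ (2 ^ n) ≤ σ^[n] x := by
    intro x hx n
    induction n with
    | zero => simp
    | succ k ih =>
        have hmemk := iter_mem x hx k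
        have hx0 : (0 : K) ≤ x := le_of_lt (lt_trans one_pos (h1 x hx))
        have h1' : x ^ (2 ^ (k + 1)) = (x ^ (2 ^ k)) ^ 2 := by
          rw [← pow_mul, pow_succ]
        rw [Function.iterate_succ_apply', h1']
        calc (x ^ (2 ^ k)) ^ 2 ≤ (σ^[k] x) ^ 2 := by
              apply pow_le_pow_left₀ (pow_nonneg hx0 _) ih
          _ ≤ σ (σ^[k] x) := hgrow _ hmemk
  refine ⟨?_, ?_, ?_⟩
  · rintro ⟨n, hab, hba⟩
    refine ⟨n, ?_, ?_⟩
    · calc a ≤ b ^ n := hab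
        _ ≤ b ^ (2 ^ n) := pow_le_pow_right₀ (le_of_lt (h1 b hb)) (le_of_lt (Nat.lt_two_pow_self (n := n)))
        _ ≤ σ^[n] b := pow2 b hb n
    · calc b ≤ a ^ n := hba
        _ ≤ a ^ (2 ^ n) := pow_le_pow_right₀ (le_of_lt (h1 a ha)) (le_of_lt (Nat.lt_two_pow_self (n := n)))
        _ ≤ σ^[n] a := pow2 a ha n
  · rintro ⟨n, hab, hba⟩
    rw [nsmul_eq_mul] at hab hba
    refine ⟨1, ?_, ?_⟩
    · have hnb : (n : K) < b := hb n
      have hgb := hgrow b hb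
      simp only [Function.iterate_one]
      nlinarith [h1 b hb]
    · have hna : (n : K) < a := ha n
      have hga := hgrow a ha
      simp only [Function.iterate_one]
      nlinarith [h1 a ha]
  · rintro ⟨n, hab, hba⟩
    have hmemn : σ^[n] a ∈ PK K := iter_mem a ha n
    have h2n : (2 : K) < σ^[n] a := h2 _ hmemn
    have hgn : (σ^[n] a) ^ 2 ≤ σ (σ^[n] a) := hgrow _ hmemn
    have hstep : ∀ y : K, y ≤ σ^[n] a → ∀ z : K, z ≤ σ^[n] a → y + z ≤ σ^[n+1] a := by
      intro y hy z hz
      rw [Function.iterate_succ_apply']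
      nlinarith
    have hmul : a * b ≤ σ^[n+1] a := by
      rw [Function.iterate_succ_apply']
      have hy : a ≤ σ^[n] a := iter_le a ha n
      have hpa : (0 : K) < a := lt_trans one_pos (h1 a ha)
      have hpb : (0 : K) < b := lt_trans one_pos (h1 b hb)
      nlinarith
    have habP : a + b ∈ PK K := by
      intro m
      have := ha m
      have hpb : (0 : K) < b := lt_trans one_pos (h1 b hb)
      linarith
    have habmP : a * b ∈ PK K := by
      intro m
      have := ha m
      have h1b := h1 b hb
      have hpa : (0 : K) < a := lt_trans one_pos (h1 a ha)
      calc (m : K) < a := ha m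
        _ = a * 1 := by ring
        _ ≤ a * b := by nlinarith
        _ ≤ a * b := le_refl _
    refine ⟨⟨n + 1, ?_, ?_⟩, ⟨n + 1, ?_, ?_⟩, ⟨1, ?_, ?_⟩⟩
    · exact hstep a (iter_le a ha n) b hba
    · calc a ≤ a + b := by linarith [lt_trans one_pos (h1 b hb)]
        _ ≤ σ^[n+1] (a + b) := iter_le _ habP _
    · exact hmul
    · calc a = a * 1 := by ring
        _ ≤ a * b := by nlinarith [h1 b hb, lt_trans one_pos (h1 a ha)]
        _ ≤ σ^[n+1] (a * b) := iter_le _ habmP _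
    · simp only [Function.iterate_one]
      exact le_refl _
    · simp only [Function.iterate_one]
      exact le_trans (hself a ha) (hself _ (hmem a ha))
end

section
/- Let K be a non-archimedean linearly ordered field and σ an order-preserving field automorphism of K with x² ≤ σ(x) for all x ∈ P_K. The map R ↦ R ∩ P_K is an inclusion-preserving bijection from the set of σ-invariant convex subrings of K strictly containing R_v onto the set of nonempty subsets S ⊆ P_K such that S is an initial segment of P_K (b ∈ S, a ∈ P_K, a ≤ b imply a ∈ S) and σ(S) ⊆ S; moreover for two such subrings R, R' one has R ⊆ R' iff R ∩ P_K ⊆ R' ∩ P_K. (This identifies the σ-rank ℛ_σ of K with the chain of nonempty initial segments of P_K modulo the equivalence ∼_σ.) -/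
section Helpers
variable {K : Type*} [Field K] [LinearOrder K] [IsStrictOrderedRing K] {σ : K ≃+* K}

lemma sigma_abs (hσ : ∀ x y : K, x ≤ y → σ x ≤ σ y) (x : K) : σ |x| = |σ x| := by
  rcases le_total 0 x with h | h
  · have h0 : (0:K) ≤ σ x := by simpa using hσ 0 x h
    rw [abs_of_nonneg h, abs_of_nonneg h0]
  · have h0 : σ x ≤ 0 := by simpa using hσ x 0 h
    rw [abs_of_nonpos h, abs_of_nonpos h0, map_neg]

lemma sigma_PK (hσ : ∀ x y : K, x ≤ y → σ x ≤ σ y) {x : K} (hx : x ∈ PK K) :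
    σ x ∈ PK K := by
  intro n
  have h1 : ((n : K) + 1) ≤ x := by
    have := hx (n + 1); push_cast at this; linarith
  have := hσ _ _ h1
  rw [map_add, map_natCast, map_one] at this
  linarith

lemma symm_mono (hσ : ∀ x y : K, x ≤ y → σ x ≤ σ y) {x y : K} (h : x ≤ y) :
    σ.symm x ≤ σ.symm y := by
  by_contra hc
  push_neg at hc
  have := hσ _ _ hc.le
  simp only [RingEquiv.apply_symm_apply] at this
  have hxy : x = y := le_antisymm h this
  rw [hxy] at hc
  exact lt_irrefl _ hc

lemma not_Rv_abs_PK {x : K} (hx : x ∉ Rv K) : |x| ∈ PK K := by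
  intro n
  by_contra hc
  push_neg at hc
  exact hx ⟨n, hc⟩

lemma abs_mem_subring {R : Subring K} {x : K} (hx : x ∈ R) : |x| ∈ R := by
  rcases abs_cases x with ⟨h, _⟩ | ⟨h, _⟩
  · rwa [h]
  · rw [h]; exact R.neg_mem hx

/-- Core inclusion lemma. -/
lemma core_incl {R R' : Subring K} (hR' : IsConvexSubring R')
    (hRv : Rv K ⊆ (R' : Set K))
    (h : (R : Set K) ∩ PK K ⊆ (R' : Set K) ∩ PK K) : (R : Set K) ⊆ (R' : Set K) := by
  intro x hx
  by_cases hxv : x ∈ Rv K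
  · exact hRv hxv
  · have h1 : |x| ∈ (R : Set K) ∩ PK K := ⟨abs_mem_subring hx, not_Rv_abs_PK hxv⟩
    have h2 := h h1
    exact hR' x |x| h2.1 (le_of_eq (abs_abs x).symm)

lemma Rv_subset_of_mem_PK {R : Subring K} (hR : IsConvexSubring R) {s : K}
    (hs : s ∈ PK K) (hsR : s ∈ R) : Rv K ⊆ (R : Set K) := by
  intro x hx
  obtain ⟨n, hn⟩ := hx
  have hsn : (n : K) < s := hs n
  have h0 : (0:K) < s := by simpa using hs 0
  apply hR x s hsR
  rw [abs_of_pos h0]; linarith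

end Helpers

section More
variable {K : Type*} [Field K] [LinearOrder K] [IsStrictOrderedRing K] {σ : K ≃+* K}

lemma symm_PK (hσ : ∀ x y : K, x ≤ y → σ x ≤ σ y) {x : K} (hx : x ∈ PK K) :
    σ.symm x ∈ PK K := by
  intro n
  have h1 : ((n : K) + 1) ≤ x := by
    have := hx (n + 1); push_cast at this; linarith
  have := symm_mono hσ h1
  rw [map_add, map_natCast, map_one] at this
  linarith

end More

/-- Theorem 5.2: for `K` non-archimedean and `σ` order preserving with `x² ≤ σ(x)` on
`P_K`, the map `R ↦ R ∩ P_K` is an inclusion-preserving bijection from the σ-invariant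
convex subrings strictly containing `R_v` onto the nonempty initial segments `S` of
`P_K` with `σ(S) ⊆ S`. -/
theorem stmt16 {K : Type*} [Field K] [LinearOrder K] [IsStrictOrderedRing K] (hna : Rv K ≠ Set.univ)
    (σ : K ≃+* K) (hσ : ∀ x y : K, x ≤ y → σ x ≤ σ y)
    (hgrow : ∀ x : K, x ∈ PK K → x ^ 2 ≤ σ x) :
    -- well-defined
    (∀ R : Subring K, IsConvexSubring R → σ '' (R : Set K) = (R : Set K) →
      Rv K ⊂ (R : Set K) →
      ((R : Set K) ∩ PK K).Nonempty ∧
      (∀ a b : K, b ∈ (R : Set K) ∩ PK K → a ∈ PK K → a ≤ b → a ∈ (R : Set K) ∩ PK K) ∧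
      σ '' ((R : Set K) ∩ PK K) ⊆ (R : Set K) ∩ PK K) ∧
    -- injective
    (∀ R R' : Subring K,
      IsConvexSubring R → σ '' (R : Set K) = (R : Set K) → Rv K ⊂ (R : Set K) →
      IsConvexSubring R' → σ '' (R' : Set K) = (R' : Set K) → Rv K ⊂ (R' : Set K) →
      (R : Set K) ∩ PK K = (R' : Set K) ∩ PK K → R = R') ∧
    -- surjective
    (∀ S : Set K, S ⊆ PK K → S.Nonempty →
      (∀ a b : K, b ∈ S → a ∈ PK K → a ≤ b → a ∈ S) →
      σ '' S ⊆ S →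
      ∃ R : Subring K, IsConvexSubring R ∧ σ '' (R : Set K) = (R : Set K) ∧
        Rv K ⊂ (R : Set K) ∧ (R : Set K) ∩ PK K = S) ∧
    -- inclusion-preserving in both directions
    (∀ R R' : Subring K,
      IsConvexSubring R → σ '' (R : Set K) = (R : Set K) → Rv K ⊂ (R : Set K) →
      IsConvexSubring R' → σ '' (R' : Set K) = (R' : Set K) → Rv K ⊂ (R' : Set K) →
      ((R : Set K) ⊆ (R' : Set K) ↔ (R : Set K) ∩ PK K ⊆ (R' : Set K) ∩ PK K)) := by
  refine ⟨?_, ?_, ?_, ?_⟩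
  · -- well-defined
    intro R hconv hinv hssub
    refine ⟨?_, ?_, ?_⟩
    · obtain ⟨x, hxR, hxRv⟩ := Set.exists_of_ssubset hssub
      exact ⟨|x|, abs_mem_subring hxR, not_Rv_abs_PK hxRv⟩
    · rintro a b ⟨hbR, hbP⟩ haP hab
      refine ⟨hconv a b hbR ?_, haP⟩
      have ha0 : (0:K) < a := by simpa using haP 0
      have hb0 : (0:K) < b := by simpa using hbP 0
      rw [abs_of_pos ha0, abs_of_pos hb0]; exact hab
    · rintro y ⟨x, ⟨hxR, hxP⟩, rfl⟩
      refine ⟨?_, sigma_PK hσ hxP⟩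
      rw [← hinv]; exact ⟨x, hxR, rfl⟩
  · -- injective
    intro R R' hc hi hv hc' hi' hv' h
    apply SetLike.coe_injective
    exact subset_antisymm (core_incl hc' hv'.1 h.le) (core_incl hc hv.1 h.ge)
  · -- surjective
    intro S hSPK hSne hinit hσS
    obtain ⟨s0, hs0⟩ := hSne
    have hs0P := hSPK hs0
    have key : ∀ a b : K, (∃ s ∈ S, |a| ≤ s) → (∃ s ∈ S, |b| ≤ s) →
        ∃ m ∈ S, |a| ≤ m ∧ |b| ≤ m ∧ (2:K) < m ∧ m ^ 2 ≤ σ m ∧ σ m ∈ S := by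
      rintro a b ⟨s, hs, hsa⟩ ⟨t, ht, htb⟩
      have hm : max s t ∈ S := by
        rcases max_cases s t with ⟨h, _⟩ | ⟨h, _⟩ <;> rw [h] <;> assumption
      refine ⟨max s t, hm, le_trans hsa (le_max_left s t),
        le_trans htb (le_max_right s t), ?_, hgrow _ (hSPK hm),
        hσS ⟨max s t, hm, rfl⟩⟩
      have := hSPK hm 2; push_cast at this; linarith
    refine ⟨{
      carrier := {x | ∃ s ∈ S, |x| ≤ s}
      one_mem' := ⟨s0, hs0, by
        have := hs0P 1; rw [abs_one]; push_cast at this; linarith⟩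
      zero_mem' := ⟨s0, hs0, by
        have := hs0P 0; rw [abs_zero]; push_cast at this; linarith⟩
      neg_mem' := by rintro x ⟨s, hs, hle⟩; exact ⟨s, hs, by rwa [abs_neg]⟩
      add_mem' := by
        rintro a b ha hb
        obtain ⟨m, hm, ham, hbm, hm2, hmsq, hσm⟩ := key a b ha hb
        refine ⟨σ m, hσm, ?_⟩
        have := abs_add_le a b
        nlinarith
      mul_mem' := by
        rintro a b ha hb
        obtain ⟨m, hm, ham, hbm, hm2, hmsq, hσm⟩ := key a b ha hb
        refine ⟨σ m, hσm, ?_⟩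
        have := abs_mul a b
        have h1 := abs_nonneg a
        have h2 := abs_nonneg b
        nlinarith }, ?_, ?_, ?_, ?_⟩
    · rintro x y ⟨s, hs, hle⟩ hxy
      exact ⟨s, hs, le_trans hxy hle⟩
    · apply subset_antisymm
      · rintro y ⟨x, ⟨s, hs, hle⟩, rfl⟩
        refine ⟨σ s, hσS ⟨s, hs, rfl⟩, ?_⟩
        rw [← sigma_abs hσ]
        exact hσ _ _ hle
      · rintro x ⟨s, hs, hle⟩
        refine ⟨σ.symm x, ⟨σ.symm s, ?_, ?_⟩, σ.apply_symm_apply x⟩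
        · have hsymmP : σ.symm s ∈ PK K := symm_PK hσ (hSPK hs)
          apply hinit _ s hs hsymmP
          have h1 : (1:K) < σ.symm s := by simpa using hsymmP 1
          have h2 : (σ.symm s) ^ 2 ≤ σ (σ.symm s) := hgrow _ hsymmP
          rw [σ.apply_symm_apply] at h2
          nlinarith
        · rw [← sigma_abs (σ := σ.symm) (fun a b h => symm_mono hσ h)]
          exact symm_mono hσ hle
    · rw [Set.ssubset_iff_subset_ne]
      constructor
      · rintro x ⟨n, hn⟩
        exact ⟨s0, hs0, le_trans hn (hs0P n).le⟩
      · intro hcon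
        have hs0R : s0 ∈ {x : K | ∃ s ∈ S, |x| ≤ s} := ⟨s0, hs0, le_of_eq (abs_of_pos (by simpa using hs0P 0))⟩
        have hs0Rv : s0 ∈ Rv K := by rw [hcon]; exact hs0R
        obtain ⟨n, hn⟩ := hs0Rv
        have := hs0P n
        rw [abs_of_pos (by simpa using hs0P 0)] at hn
        linarith
    · ext x
      constructor
      · rintro ⟨⟨s, hs, hle⟩, hxP⟩
        apply hinit x s hs hxP
        rwa [abs_of_pos (by simpa using hxP 0)] at hle
      · intro hx
        exact ⟨⟨x, hx, le_of_eq (abs_of_pos (by simpa using hSPK hx 0))⟩, hSPK hx⟩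
  · -- inclusion-preserving
    intro R R' hc hi hv hc' hi' hv'
    exact ⟨fun h => Set.inter_subset_inter_left _ h,
      fun h => core_incl hc' hv'.1 h⟩
end

section
/- Let K be a linearly ordered field, σ an order-preserving field automorphism of K with x² ≤ σ(x) for all x ∈ P_K, and a ∈ P_K. Then R^σ_a := {x ∈ K : |x| ≤ σ^[n](a) for some n ∈ ℕ} is a convex subring of K containing a and strictly containing R_v, it satisfies σ(R^σ_a) = R^σ_a, and it is contained in every σ-invariant convex subring of K containing a; that is, R^σ_a is the σ-principal convex subring generated by a. -/
/-- For `a ∈ P_K` and `σ` order preserving with `x² ≤ σ(x)` on `P_K`, the set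
`R^σ_a = {x : |x| ≤ σ^[n](a) for some n}` is the σ-principal convex subring generated
by `a`: a σ-invariant convex subring containing `a`, strictly containing `R_v`, and
contained in every σ-invariant convex subring containing `a`. -/
theorem stmt17 {K : Type*} [Field K] [LinearOrder K] [IsStrictOrderedRing K] (σ : K ≃+* K)
    (hσ : ∀ x y : K, x ≤ y → σ x ≤ σ y)
    (hgrow : ∀ x : K, x ∈ PK K → x ^ 2 ≤ σ x)
    (a : K) (ha : a ∈ PK K) :
    ∃ R : Subring K, (R : Set K) = {x : K | ∃ n : ℕ, |x| ≤ (⇑σ)^[n] a} ∧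
      IsConvexSubring R ∧ a ∈ R ∧ Rv K ⊂ (R : Set K) ∧
      σ '' (R : Set K) = (R : Set K) ∧
      ∀ R' : Subring K, IsConvexSubring R' → σ '' (R' : Set K) = (R' : Set K) →
        a ∈ R' → R ≤ R' := by
  have hmono : Monotone ⇑σ := fun x y h => hσ x y h
  have hsm : StrictMono ⇑σ := hmono.strictMono_of_injective σ.injective
  set b : ℕ → K := fun n => (⇑σ)^[n] a with hbdef
  have hbs : ∀ n, b (n + 1) = σ (b n) := fun n => Function.iterate_succ_apply' _ _ _
  have hP : ∀ n, b n ∈ PK K := by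
    intro n
    induction n with
    | zero => exact ha
    | succ n ih =>
      intro m
      rw [hbs]
      calc (m : K) = σ (m : K) := (map_natCast (σ : K →+* K) m).symm
        _ < σ (b n) := hsm (ih m)
  have h1 : ∀ n, (1 : K) ≤ b n := fun n => le_of_lt (by simpa using hP n 1)
  have h2 : ∀ n, (2 : K) ≤ b n := fun n => le_of_lt (by simpa using hP n 2)
  have h0 : ∀ n, (0 : K) < b n := fun n => lt_of_lt_of_le one_pos (h1 n)
  have hsq : ∀ n, b n * b n ≤ b (n + 1) := by
    intro n
    rw [hbs]
    have := hgrow (b n) (hP n)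
    rwa [sq] at this
  have hle : ∀ n, b n ≤ b (n + 1) := fun n =>
    le_trans (le_mul_of_one_le_left (h0 n).le (h1 n)) (hsq n)
  have hbm : Monotone b := monotone_nat_of_le_succ hle
  refine ⟨{
    carrier := {x : K | ∃ n : ℕ, |x| ≤ b n}
    one_mem' := ⟨0, by simpa using h1 0⟩
    zero_mem' := ⟨0, by simpa using (h0 0).le⟩
    add_mem' := by
      rintro x y ⟨n, hn⟩ ⟨m, hm⟩
      refine ⟨max n m + 1, ?_⟩
      have h1' : |x| ≤ b (max n m) := hn.trans (hbm (le_max_left n m))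
      have h2' : |y| ≤ b (max n m) := hm.trans (hbm (le_max_right n m))
      calc |x + y| ≤ |x| + |y| := abs_add_le x y
        _ ≤ b (max n m) + b (max n m) := add_le_add h1' h2'
        _ = 2 * b (max n m) := (two_mul _).symm
        _ ≤ b (max n m) * b (max n m) :=
            mul_le_mul_of_nonneg_right (h2 _) (h0 _).le
        _ ≤ b (max n m + 1) := hsq _
    mul_mem' := by
      rintro x y ⟨n, hn⟩ ⟨m, hm⟩
      refine ⟨max n m + 1, ?_⟩
      have h1' : |x| ≤ b (max n m) := hn.trans (hbm (le_max_left n m))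
      have h2' : |y| ≤ b (max n m) := hm.trans (hbm (le_max_right n m))
      calc |x * y| = |x| * |y| := abs_mul x y
        _ ≤ b (max n m) * b (max n m) :=
            mul_le_mul h1' h2' (abs_nonneg y) (h0 _).le
        _ ≤ b (max n m + 1) := hsq _
    neg_mem' := by
      rintro x ⟨n, hn⟩
      exact ⟨n, by simpa using hn⟩ }, rfl, ?_, ?_, ?_, ?_, ?_⟩
  · -- convex
    rintro x y ⟨n, hn⟩ hxy
    exact ⟨n, hxy.trans hn⟩
  · -- a ∈ R
    exact ⟨0, le_of_eq (abs_of_pos (h0 0))⟩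
  · -- Rv ⊂ R
    constructor
    · rintro x ⟨n, hn⟩
      exact ⟨0, hn.trans (hP 0 n).le⟩
    · intro hsub
      obtain ⟨n, hn⟩ := hsub ⟨0, le_of_eq (abs_of_pos (h0 0))⟩
      rw [abs_of_pos (h0 0)] at hn
      exact absurd hn (not_le.mpr (ha n))
  · -- σ '' R = R
    ext x
    constructor
    · rintro ⟨y, ⟨n, hn⟩, rfl⟩
      refine ⟨n + 1, ?_⟩
      rw [abs_le] at hn ⊢
      rw [hbs]
      constructor
      · have := hσ _ _ hn.1
        rwa [map_neg] at this
      · exact hσ _ _ hn.2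
    · rintro ⟨n, hn⟩
      refine ⟨σ.symm x, ⟨n, ?_⟩, σ.apply_symm_apply x⟩
      have hsymm : ∀ u v : K, u ≤ v → σ.symm u ≤ σ.symm v := by
        intro u v huv
        rw [← hsm.le_iff_le, σ.apply_symm_apply, σ.apply_symm_apply]
        exact huv
      have hbn : σ.symm (b n) ≤ b n := by
        rw [← hsm.le_iff_le, σ.apply_symm_apply, ← hbs]
        exact hle n
      rw [abs_le] at hn ⊢
      constructor
      · have := hsymm _ _ hn.1
        rw [map_neg] at this
        exact le_trans (neg_le_neg hbn) this
      · exact le_trans (hsymm _ _ hn.2) hbn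
  · -- minimality
    intro R' hconv hinv haR'
    have hbR' : ∀ n, b n ∈ R' := by
      intro n
      induction n with
      | zero => exact haR'
      | succ n ih =>
        rw [hbs]
        have : σ (b n) ∈ σ '' (R' : Set K) := ⟨b n, ih, rfl⟩
        rwa [hinv] at this
    rintro x ⟨n, hn⟩
    exact hconv x (b n) (hbR' n) (by rwa [abs_of_pos (h0 n)])
end

section
/- Let K be a linearly ordered field, σ an order-preserving field automorphism of K with x² ≤ σ(x) for all x ∈ P_K, and a, b ∈ P_K. Let R^σ_a (resp. R^σ_b) be the smallest σ-invariant convex subring of K containing a (resp. b). Then R^σ_a ⊆ R^σ_b if and only if there is n ∈ ℕ with a ≤ σ^[n](b); in particular R^σ_a = R^σ_b if and only if a ∼_σ b. (Hence the σ-principal rank ℛ_σ^pr of K is anti-isomorphic to the chain P_K modulo ∼_σ, i.e. to (Γ/∼_{σ_Γ})*.) -/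
section Aux

variable {K : Type*} [Field K] [LinearOrder K] [IsStrictOrderedRing K] (σ : K ≃+* K)

lemma aux_iter_PK (hσ : ∀ x y : K, x ≤ y → σ x ≤ σ y) {b : K} (hb : b ∈ PK K) :
    ∀ n : ℕ, (⇑σ)^[n] b ∈ PK K := by
  have hmono : Monotone ⇑σ := fun x y h => hσ x y h
  have hsm : StrictMono ⇑σ := hmono.strictMono_of_injective σ.injective
  intro n
  induction n with
  | zero => exact hb
  | succ n ih =>
    intro m
    rw [Function.iterate_succ_apply']
    calc (m : K) = σ m := (map_natCast σ m).symm
    _ < σ ((⇑σ)^[n] b) := hsm (ih m)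

lemma aux_iter_mono (hσ : ∀ x y : K, x ≤ y → σ x ≤ σ y)
    (hgrow : ∀ x : K, x ∈ PK K → x ^ 2 ≤ σ x) {b : K} (hb : b ∈ PK K) :
    Monotone (fun n : ℕ => (⇑σ)^[n] b) := by
  have hmono : Monotone ⇑σ := fun x y h => hσ x y h
  have h1 : (1 : K) < b := by simpa using hb 1
  have hbσ : b ≤ σ b := by
    have : b ≤ b ^ 2 := by nlinarith
    exact this.trans (hgrow b hb)
  apply monotone_nat_of_le_succ
  intro n
  rw [Function.iterate_succ_apply]
  exact hmono.iterate n hbσ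

lemma aux_key (hσ : ∀ x y : K, x ≤ y → σ x ≤ σ y)
    (hgrow : ∀ x : K, x ∈ PK K → x ^ 2 ≤ σ x)
    (a b : K) (ha : a ∈ PK K) (hb : b ∈ PK K) (Ra Rb : Subring K)
    (hRa : IsConvexSubring Ra ∧ σ '' (Ra : Set K) = (Ra : Set K) ∧ a ∈ Ra ∧
      ∀ R' : Subring K, IsConvexSubring R' → σ '' (R' : Set K) = (R' : Set K) →
        a ∈ R' → Ra ≤ R')
    (hRb : IsConvexSubring Rb ∧ σ '' (Rb : Set K) = (Rb : Set K) ∧ b ∈ Rb ∧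
      ∀ R' : Subring K, IsConvexSubring R' → σ '' (R' : Set K) = (R' : Set K) →
        b ∈ R' → Rb ≤ R') :
    Ra ≤ Rb ↔ ∃ n : ℕ, a ≤ (⇑σ)^[n] b := by
  have hmono : Monotone ⇑σ := fun x y h => hσ x y h
  have hsm : StrictMono ⇑σ := hmono.strictMono_of_injective σ.injective
  have hPK := aux_iter_PK σ hσ hb
  have hiter := aux_iter_mono σ hσ hgrow hb
  have habs : ∀ x : K, |σ x| = σ |x| := by
    intro x
    rcases le_total 0 x with h | h
    · rw [abs_of_nonneg h, abs_of_nonneg (by simpa using hmono h)]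
    · rw [abs_of_nonpos h, abs_of_nonpos (by simpa using hmono h), map_neg]
  -- The subring S of elements dominated by some iterate of σ applied to b.
  set S : Subring K :=
    { carrier := {x : K | ∃ n : ℕ, |x| ≤ (⇑σ)^[n] b}
      zero_mem' := ⟨0, by simpa using (hb 0).le⟩
      one_mem' := ⟨0, by simpa using (hb 1).le⟩
      neg_mem' := by
        rintro x ⟨n, hn⟩
        exact ⟨n, by simpa using hn⟩
      add_mem' := by
        rintro x y ⟨n, hn⟩ ⟨m, hm⟩
        refine ⟨max n m + 1, ?_⟩
        set c := (⇑σ)^[max n m] b with hc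
        have hcPK : c ∈ PK K := hPK _
        have hx : |x| ≤ c := hn.trans (hiter (le_max_left n m))
        have hy : |y| ≤ c := hm.trans (hiter (le_max_right n m))
        have h2 : (2 : K) < c := by simpa using hcPK 2
        have : |x + y| ≤ c ^ 2 := by
          have := abs_add_le x y
          nlinarith
        rw [Function.iterate_succ_apply']
        exact this.trans (hgrow c hcPK)
      mul_mem' := by
        rintro x y ⟨n, hn⟩ ⟨m, hm⟩
        refine ⟨max n m + 1, ?_⟩
        set c := (⇑σ)^[max n m] b with hc
        have hcPK : c ∈ PK K := hPK _
        have hx : |x| ≤ c := hn.trans (hiter (le_max_left n m))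
        have hy : |y| ≤ c := hm.trans (hiter (le_max_right n m))
        have : |x * y| ≤ c ^ 2 := by
          rw [abs_mul, sq]
          exact mul_le_mul hx hy (abs_nonneg y) ((abs_nonneg x).trans hx)
        rw [Function.iterate_succ_apply']
        exact this.trans (hgrow c hcPK) }
  have hSconv : IsConvexSubring S := by
    rintro x y ⟨n, hn⟩ hxy
    exact ⟨n, hxy.trans hn⟩
  have hSinv : σ '' (S : Set K) = (S : Set K) := by
    ext x
    constructor
    · rintro ⟨z, ⟨n, hn⟩, rfl⟩
      refine ⟨n + 1, ?_⟩
      rw [habs, Function.iterate_succ_apply']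
      exact hmono hn
    · rintro ⟨n, hn⟩
      refine ⟨σ.symm x, ⟨n, ?_⟩, σ.apply_symm_apply x⟩
      rw [← hsm.le_iff_le, ← habs, σ.apply_symm_apply,
        ← Function.iterate_succ_apply' (⇑σ) n b]
      exact hn.trans (hiter (Nat.le_succ n))
  have hbS : b ∈ S := ⟨0, le_of_eq (abs_of_pos ((hb 0).trans_le' (by simp)))⟩
  have hRbS : Rb ≤ S := hRb.2.2.2 S hSconv hSinv hbS
  have hapos : (0 : K) < a := (ha 0).trans_le' (by simp)
  constructor
  · intro hle
    obtain ⟨n, hn⟩ := hRbS (hle hRa.2.2.1)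
    exact ⟨n, (abs_of_pos hapos).symm.trans_le hn⟩
  · rintro ⟨n, hn⟩
    -- σ^[n] b ∈ Rb
    have hσRb : ∀ m : ℕ, (⇑σ)^[m] b ∈ Rb := by
      intro m
      induction m with
      | zero => exact hRb.2.2.1
      | succ m ih =>
        rw [Function.iterate_succ_apply']
        have : σ ((⇑σ)^[m] b) ∈ σ '' (Rb : Set K) := ⟨_, ih, rfl⟩
        rwa [hRb.2.1] at this
    have haRb : a ∈ Rb := by
      refine hRb.1 a _ (hσRb n) ?_
      rw [abs_of_pos hapos, abs_of_pos ((hPK n 0).trans_le' (by simp))]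
      exact hn
    exact hRa.2.2.2 Rb hRb.1 hRb.2.1 haRb

end Aux

/-- If `R^σ_a` (resp. `R^σ_b`) is the smallest σ-invariant convex subring containing
`a` (resp. `b`), for `a, b ∈ P_K` and `σ` order preserving with `x² ≤ σ(x)` on `P_K`,
then `R^σ_a ⊆ R^σ_b` iff `a ≤ σ^[n](b)` for some `n`, and `R^σ_a = R^σ_b` iff
`a ∼_σ b`. -/
theorem stmt18 {K : Type*} [Field K] [LinearOrder K] [IsStrictOrderedRing K] (σ : K ≃+* K)
    (hσ : ∀ x y : K, x ≤ y → σ x ≤ σ y)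
    (hgrow : ∀ x : K, x ∈ PK K → x ^ 2 ≤ σ x)
    (a b : K) (ha : a ∈ PK K) (hb : b ∈ PK K) (Ra Rb : Subring K)
    (hRa : IsConvexSubring Ra ∧ σ '' (Ra : Set K) = (Ra : Set K) ∧ a ∈ Ra ∧
      ∀ R' : Subring K, IsConvexSubring R' → σ '' (R' : Set K) = (R' : Set K) →
        a ∈ R' → Ra ≤ R')
    (hRb : IsConvexSubring Rb ∧ σ '' (Rb : Set K) = (Rb : Set K) ∧ b ∈ Rb ∧
      ∀ R' : Subring K, IsConvexSubring R' → σ '' (R' : Set K) = (R' : Set K) →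
        b ∈ R' → Rb ≤ R') :
    (Ra ≤ Rb ↔ ∃ n : ℕ, a ≤ (⇑σ)^[n] b) ∧
    (Ra = Rb ↔ ∃ n : ℕ, a ≤ (⇑σ)^[n] b ∧ b ≤ (⇑σ)^[n] a) := by
  have h1 := aux_key σ hσ hgrow a b ha hb Ra Rb hRa hRb
  have h2 := aux_key σ hσ hgrow b a hb ha Rb Ra hRb hRa
  refine ⟨h1, ?_⟩
  rw [le_antisymm_iff, h1, h2]
  constructor
  · rintro ⟨⟨n, hn⟩, ⟨m, hm⟩⟩
    exact ⟨max n m, hn.trans (aux_iter_mono σ hσ hgrow hb (le_max_left n m)),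
      hm.trans (aux_iter_mono σ hσ hgrow ha (le_max_right n m))⟩
  · rintro ⟨n, hn, hm⟩
    exact ⟨⟨n, hn⟩, ⟨n, hm⟩⟩
end
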